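/- Let G be a finite simple graph on a nonempty vertex set. Then box(G) ≤ min{ν(G) + 1, ν(Ḡ)}, where Ḡ denotes the complement of G, except that when Ḡ has no edges (i.e., G is complete) the term ν(Ḡ) = 0 and indeed box(G) = 0. -/

import Mathlib

/-!
A maximal matching `M` of a graph `H` gives `|M|` disjoint pairs of vertices whose union is a
vertex cover of `H`. For `H = Gᶜ` every pair is a non-edge of `G`, and one interval per vertex
and pair (the two ends become two distinct points, every other vertex an interval containing
exactly the ends it is adjacent to) separates both ends from all their non-neighbours. As every
non-edge of `G` has a matched end, these `ν(Gᶜ)` coordinates form a box representation.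

For `H = G` the unmatched vertices are independent, so one extra coordinate placing them at
distinct points separates them from each other. The matched vertices are first re-paired so as
to minimise the number of pairs that are edges of `G`; a swap argument shows that the ends of
the pairs that are edges then form a clique. Such an end has to be separated only from
unmatched vertices, which again takes a single coordinate per pair.
-/

/-- A `k`-box representation of `G`: assignments of axis-parallel boxes
(given by lower and upper corners) to vertices so that distinct vertices are
adjacent iff all their coordinate intervals intersect. -/
def HasBoxRep {V : Type*} (G : SimpleGraph V) (k : ℕ) : Prop :=
  ∃ a b : V → Fin k → ℝ,
    (∀ v i, a v i ≤ b v i) ∧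
    ∀ u v : V, u ≠ v →
      (G.Adj u v ↔ ∀ i : Fin k, (Set.Icc (a u i) (b u i) ∩ Set.Icc (a v i) (b v i)).Nonempty)

/-- The boxicity of `G`: the least `k` such that `G` has a `k`-box representation. -/
noncomputable def boxicity {V : Type*} (G : SimpleGraph V) : ℕ :=
  sInf {k : ℕ | HasBoxRep G k}

/-- `M` is a matching of `G`: a set of edges of `G`, pairwise sharing no vertex. -/
def IsMatchingSet {V : Type*} (G : SimpleGraph V) (M : Finset (Sym2 V)) : Prop :=
  (↑M : Set (Sym2 V)) ⊆ G.edgeSet ∧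
  ∀ e ∈ M, ∀ f ∈ M, e ≠ f → ∀ x : V, x ∈ e → x ∉ f

/-- `M` is a maximal matching of `G`: a matching such that no edge of `G`
can be added to it while keeping it a matching. -/
def IsMaximalMatchingSet {V : Type*} [DecidableEq V] (G : SimpleGraph V)
    (M : Finset (Sym2 V)) : Prop :=
  IsMatchingSet G M ∧ ∀ e ∈ G.edgeSet, e ∉ M → ¬ IsMatchingSet G (insert e M)

/-- `ν(G)`: the minimum cardinality of a maximal matching of `G`. -/
noncomputable def minMaximalMatching {V : Type*} [DecidableEq V] (G : SimpleGraph V) : ℕ :=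
  sInf {k : ℕ | ∃ M : Finset (Sym2 V), IsMaximalMatchingSet G M ∧ M.card = k}

namespace SimpleGraph

variable {V : Type*} {G : SimpleGraph V}

/-- One coordinate of a box representation of a supergraph of `G`. -/
structure IntervalLayer (G : SimpleGraph V) where
  lo : V → ℝ
  hi : V → ℝ
  lo_le_hi : ∀ v, lo v ≤ hi v
  lo_le_hi_of_adj : ∀ {u v}, G.Adj u v → lo u ≤ hi v

namespace IntervalLayer

def Separates (L : G.IntervalLayer) (u v : V) : Prop :=
  L.hi u < L.lo v ∨ L.hi v < L.lo u

theorem Separates.symm {L : G.IntervalLayer} {u v : V} (h : L.Separates u v) :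
    L.Separates v u :=
  Or.symm h

end IntervalLayer

theorem hasBoxRep_of_forall_separates {ι : Type*} [Fintype ι] (L : ι → G.IntervalLayer)
    (hL : ∀ u v, u ≠ v → ¬G.Adj u v → ∃ i, (L i).Separates u v) :
    HasBoxRep G (Fintype.card ι) := by
  let e := Fintype.equivFin ι
  refine ⟨fun v k => (L (e.symm k)).lo v, fun v k => (L (e.symm k)).hi v,
    fun v k => (L _).lo_le_hi v, fun u v huv => ?_⟩
  simp only [Set.Icc_inter_Icc, Set.nonempty_Icc, sup_le_iff, le_inf_iff]
  refine ⟨fun h k => ⟨⟨(L _).lo_le_hi u, (L _).lo_le_hi_of_adj h.symm⟩,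
    (L _).lo_le_hi_of_adj h, (L _).lo_le_hi v⟩, fun h => by_contra fun hnadj => ?_⟩
  obtain ⟨i, hi⟩ := hL u v huv hnadj
  obtain ⟨⟨-, hvu⟩, huv', -⟩ := h (e i)
  simp only [Equiv.symm_apply_apply, e] at hvu huv'
  rcases hi with hi | hi <;> linarith

namespace IntervalLayer

open scoped Classical in
noncomputable def pairOfNotAdj (x y : V) (h : ¬G.Adj x y) : G.IntervalLayer where
  lo v := if v = x then 0 else if v = y then 3 else if G.Adj v x then 0 else 1
  hi v := if v = x then 0 else if v = y then 3 else if G.Adj v y then 3 else 2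
  lo_le_hi v := by split_ifs <;> norm_num
  lo_le_hi_of_adj {u v} huv := by
    have hvu := huv.symm
    split_ifs <;> subst_vars <;> simp_all

theorem separates_pairOfNotAdj {x y v w : V} (h : ¬G.Adj x y) (hxy : x ≠ y)
    (hw : w = x ∨ w = y) (hvw : v ≠ w) (hwv : ¬G.Adj w v) :
    (pairOfNotAdj x y h).Separates w v := by
  have := mt G.adj_symm hwv
  rcases hw with rfl | rfl
  · left
    simp only [pairOfNotAdj]
    split_ifs <;> simp_all
  · right
    simp only [pairOfNotAdj]
    split_ifs <;> norm_num <;> simp_all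

/- Vertices of `C` other than `x, y` meet every interval here; a vertex off `C` meets exactly
those of `x ↦ [2, 4]` and `y ↦ [4, 6]` it is adjacent to. -/
open scoped Classical in
noncomputable def pairOfCover {C : Set V} (hC : G.IsVertexCover C) (x y : V) :
    G.IntervalLayer where
  lo v := if v = x then 2 else if v = y then 4 else if v ∈ C then 0
    else if G.Adj v x then 0 else if G.Adj v y then 5 else 7
  hi v := if v = x then 4 else if v = y then 6 else if v ∈ C then 8
    else if G.Adj v y then 8 else if G.Adj v x then 3 else 8
  lo_le_hi v := by split_ifs <;> norm_num
  lo_le_hi_of_adj {u v} huv := by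
    have hvu := huv.symm
    have hcover := hC huv
    split_ifs <;> subst_vars <;> simp_all <;> norm_num

theorem separates_pairOfCover {C : Set V} (hC : G.IsVertexCover C) {x y v w : V}
    (hxy : x ≠ y) (hx : x ∈ C) (hy : y ∈ C) (hw : w = x ∨ w = y) (hv : v ∉ C)
    (hwv : ¬G.Adj w v) : (pairOfCover hC x y).Separates w v := by
  have := mt G.adj_symm hwv
  have hvx : v ≠ x := by rintro rfl; exact hv hx
  have hvy : v ≠ y := by rintro rfl; exact hv hy
  rcases hw with rfl | rfl
  · left
    simp only [pairOfCover]
    split_ifs <;> simp_all <;> norm_num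
  · simp only [Separates, pairOfCover]
    split_ifs <;> simp_all <;> norm_num

open scoped Classical in
noncomputable def pointsOffCover [Fintype V] {C : Set V} (hC : G.IsVertexCover C) :
    G.IntervalLayer where
  lo v := if v ∈ C then 0 else (Fintype.equivFin V v : ℕ)
  hi v := if v ∈ C then Fintype.card V else (Fintype.equivFin V v : ℕ)
  lo_le_hi v := by split_ifs <;> simp
  lo_le_hi_of_adj {u v} huv := by
    have hcover := hC huv
    split_ifs <;> simp_all

theorem separates_pointsOffCover [Fintype V] {C : Set V} (hC : G.IsVertexCover C) {u v : V}
    (huv : u ≠ v) (hu : u ∉ C) (hv : v ∉ C) : (pointsOffCover hC).Separates u v := by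
  have : ((Fintype.equivFin V u : ℕ) : ℝ) ≠ (Fintype.equivFin V v : ℕ) := by
    simpa [Fin.val_inj] using huv
  simpa [Separates, pointsOffCover, hu, hv] using this.lt_or_gt

open scoped Classical in
noncomputable def ofPair {C : Set V} (hC : G.IsVertexCover C) (x y : V) : G.IntervalLayer :=
  if h : G.Adj x y then pairOfCover hC x y else pairOfNotAdj x y h

theorem separates_ofPair {C : Set V} (hC : G.IsVertexCover C) {x y v w : V} (hxy : x ≠ y)
    (hx : x ∈ C) (hy : y ∈ C) (hw : w = x ∨ w = y) (hvw : v ≠ w) (hwv : ¬G.Adj w v)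
    (hv : v ∉ C ∨ ¬G.Adj x y) : (ofPair hC x y).Separates w v := by
  unfold ofPair
  split_ifs with h
  · exact separates_pairOfCover hC hxy hx hy hw (hv.resolve_right (not_not.2 h)) hwv
  · exact separates_pairOfNotAdj h hxy hw hvw hwv

end IntervalLayer

variable {ι : Type*}

def adjPairs (G : SimpleGraph V) (g : ι × Bool → V) : Set ι :=
  {i | G.Adj (g (i, false)) (g (i, true))}

theorem mem_adjPairs_iff {g : ι × Bool → V} {i : ι} (s : Bool) :
    i ∈ G.adjPairs g ↔ G.Adj (g (i, s)) (g (i, !s)) := by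
  cases s <;> simp [adjPairs, adj_comm]

theorem adjPairs_comp_swap_ssubset [DecidableEq ι] {g : ι × Bool → V} {i j : ι} {s t : Bool}
    (hij : i ≠ j) (hi : i ∈ G.adjPairs g) (hj : j ∈ G.adjPairs g)
    (hst : ¬G.Adj (g (i, s)) (g (j, t))) :
    G.adjPairs (g ∘ Equiv.swap (i, !s) (j, t)) ⊂ G.adjPairs g := by
  have hi' : i ∉ G.adjPairs (g ∘ Equiv.swap (i, !s) (j, t)) := by
    rw [mem_adjPairs_iff s]
    simpa [Equiv.swap_apply_of_ne_of_ne, hij] using hst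
  refine (Set.ssubset_iff_of_subset fun l hl => ?_).2 ⟨i, hi, hi'⟩
  by_cases hlj : l = j
  · exact hlj ▸ hj
  by_cases hli : l = i
  · exact (hi' (hli ▸ hl)).elim
  simpa [adjPairs, Equiv.swap_apply_of_ne_of_ne, hli, hlj] using hl

theorem exists_perm_isClique_adjPairs [Finite ι] (G : SimpleGraph V) (f : ι × Bool → V) :
    ∃ σ : Equiv.Perm (ι × Bool),
      G.IsClique ((f ∘ σ) '' (G.adjPairs (f ∘ σ) ×ˢ Set.univ)) := by
  classical
  let c (σ : Equiv.Perm (ι × Bool)) := (G.adjPairs (f ∘ σ)).ncard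
  refine ⟨Function.argmin c, ?_⟩
  rintro _ ⟨⟨i, s⟩, ⟨hi, -⟩, rfl⟩ _ ⟨⟨j, t⟩, ⟨hj, -⟩, rfl⟩ hne
  by_cases hij : i = j
  · subst hij
    obtain rfl : t = !s := by cases s <;> cases t <;> simp_all
    exact (mem_adjPairs_iff s).1 hi
  · by_contra hst
    exact Function.not_lt_argmin c (Function.argmin c * Equiv.swap (i, !s) (j, t))
      (Set.ncard_lt_ncard (adjPairs_comp_swap_ssubset hij hi hj hst))

end SimpleGraph

theorem IsMatchingSet.insert {V : Type*} [DecidableEq V] {H : SimpleGraph V}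
    {M : Finset (Sym2 V)} {e : Sym2 V} (hM : IsMatchingSet H M) (he : e ∈ H.edgeSet)
    (hdisj : ∀ f ∈ M, ∀ x ∈ e, x ∉ f) : IsMatchingSet H (insert e M) := by
  refine ⟨by simpa [Set.insert_subset_iff] using ⟨he, hM.1⟩, ?_⟩
  simp only [Finset.mem_insert]
  rintro f₁ (rfl | h₁) f₂ (rfl | h₂) hne x hx₁ hx₂
  · exact hne rfl
  · exact hdisj _ h₂ x hx₁ hx₂
  · exact hdisj _ h₁ x hx₂ hx₁
  · exact hM.2 _ h₁ _ h₂ hne x hx₁ hx₂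

theorem IsMaximalMatchingSet.exists_pairing {V : Type*} [DecidableEq V] {H : SimpleGraph V}
    {M : Finset (Sym2 V)} (hM : IsMaximalMatchingSet H M) :
    ∃ f : M × Bool → V, Function.Injective f ∧
      (∀ e, H.Adj (f (e, false)) (f (e, true))) ∧ H.IsVertexCover (Set.range f) := by
  have hends : ∀ e : M, ∃ p : V × V, H.Adj p.1 p.2 ∧ s(p.1, p.2) = e := by
    rintro ⟨e, he⟩
    induction e using Sym2.ind with
    | _ x y => exact ⟨(x, y), hM.1.1 he, rfl⟩
  choose p hp hpe using hends
  set f : M × Bool → V := fun x => if x.2 then (p x.1).2 else (p x.1).1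
  have mem_iff : ∀ (e : M) (v : V), v ∈ (e : Sym2 V) ↔ ∃ b, f (e, b) = v := by
    intro e v
    rw [← hpe e, Sym2.mem_iff]
    constructor
    · rintro (rfl | rfl)
      exacts [⟨false, rfl⟩, ⟨true, rfl⟩]
    · rintro ⟨_ | _, rfl⟩
      exacts [.inl rfl, .inr rfl]
  have mem_range : ∀ e ∈ M, ∀ v ∈ e, v ∈ Set.range f := fun e he v hv =>
    let ⟨b, hb⟩ := (mem_iff ⟨e, he⟩ v).1 hv; ⟨_, hb⟩
  refine ⟨f, ?_, hp, fun u v huv => ?_⟩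
  · rintro ⟨e, b⟩ ⟨e', b'⟩ h
    by_cases hee : e = e'
    · subst hee
      cases b <;> cases b' <;> simp_all [f, (hp e).ne, (hp e).ne.symm]
    · exact (hM.1.2 _ e.2 _ e'.2 (Subtype.coe_ne_coe.2 hee) _ ((mem_iff e _).2 ⟨b, h⟩)
        ((mem_iff e' _).2 ⟨b', rfl⟩)).elim
  · by_contra! hout
    refine hM.2 s(u, v) huv (fun hM' => ?_) (hM.1.insert huv fun e he x hx hxe => ?_)
    · exact hout.1 (mem_range _ hM' u (Sym2.mem_mk_left u v))
    · rcases Sym2.mem_iff.1 hx with rfl | rfl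
      exacts [hout.1 (mem_range e he x hxe), hout.2 (mem_range e he x hxe)]

theorem isMatchingSet_empty {V : Type*} (H : SimpleGraph V) : IsMatchingSet H ∅ :=
  ⟨by simp, by simp⟩

theorem exists_isMaximalMatchingSet {V : Type*} [Fintype V] [DecidableEq V]
    (H : SimpleGraph V) : ∃ M, IsMaximalMatchingSet H M := by
  classical
  obtain ⟨M, hM, hmax⟩ := Finset.exists_max_image
    ({M | IsMatchingSet H M} : Finset (Finset (Sym2 V))) Finset.card
    ⟨∅, by simpa using isMatchingSet_empty H⟩
  rw [Finset.mem_filter] at hM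
  refine ⟨M, hM.2, fun e _ heM hins => ?_⟩
  have := hmax (insert e M) (by simpa using hins)
  rw [Finset.card_insert_of_notMem heM] at this
  omega

theorem exists_isMaximalMatchingSet_card_eq {V : Type*} [Fintype V] [DecidableEq V]
    (H : SimpleGraph V) : ∃ M, IsMaximalMatchingSet H M ∧ M.card = minMaximalMatching H := by
  obtain ⟨M, hM⟩ := exists_isMaximalMatchingSet H
  exact Nat.sInf_mem (s := {k | ∃ M, IsMaximalMatchingSet H M ∧ M.card = k}) ⟨_, M, hM, rfl⟩

theorem minMaximalMatching_eq_zero {V : Type*} [DecidableEq V] {H : SimpleGraph V}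
    (h : H.edgeSet = ∅) : minMaximalMatching H = 0 :=
  Nat.sInf_eq_zero.2 <| .inl ⟨∅, ⟨isMatchingSet_empty H, by simp [h]⟩, rfl⟩

namespace SimpleGraph

open IntervalLayer

variable {V : Type*} [DecidableEq V] {G : SimpleGraph V}

theorem hasBoxRep_card_of_isMaximalMatchingSet_compl {M : Finset (Sym2 V)}
    (hM : IsMaximalMatchingSet Gᶜ M) : HasBoxRep G M.card := by
  obtain ⟨f, hf, hadj, hcover⟩ := hM.exists_pairing
  have hnadj e : ¬G.Adj (f (e, false)) (f (e, true)) := ((compl_adj G _ _).1 (hadj e)).2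
  have hsep e b w (hw : w ≠ f (e, b)) (hnw : ¬G.Adj (f (e, b)) w) :
      (pairOfNotAdj _ _ (hnadj e)).Separates (f (e, b)) w :=
    separates_pairOfNotAdj _ (hf.ne (by simp)) (by cases b <;> simp) hw hnw
  rw [← Fintype.card_coe M]
  refine hasBoxRep_of_forall_separates (fun e => pairOfNotAdj _ _ (hnadj e))
    fun u v huv h => ?_
  obtain ⟨⟨e, b⟩, rfl⟩ | ⟨⟨e, b⟩, rfl⟩ := hcover ((compl_adj G u v).2 ⟨huv, h⟩)
  · exact ⟨e, hsep e b v huv.symm h⟩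
  · exact ⟨e, (hsep e b u huv (h ∘ Adj.symm)).symm⟩

theorem hasBoxRep_card_add_one_of_isMaximalMatchingSet [Fintype V] {M : Finset (Sym2 V)}
    (hM : IsMaximalMatchingSet G M) : HasBoxRep G (M.card + 1) := by
  obtain ⟨f, hf, -, hcover⟩ := hM.exists_pairing
  obtain ⟨σ, hclique⟩ := G.exists_perm_isClique_adjPairs f
  set g := f ∘ σ
  have hg : Function.Injective g := hf.comp σ.injective
  have hC : G.IsVertexCover (Set.range g) := by rwa [σ.surjective.range_comp]
  let L (o : Option M) : G.IntervalLayer :=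
    o.elim (pointsOffCover hC) fun e => ofPair hC (g (e, false)) (g (e, true))
  have hsep e b w (hw : w ≠ g (e, b)) (hnw : ¬G.Adj (g (e, b)) w)
      (hw' : w ∉ Set.range g ∨ e ∉ G.adjPairs g) : (L (some e)).Separates (g (e, b)) w :=
    separates_ofPair hC (hg.ne (by simp)) ⟨_, rfl⟩ ⟨_, rfl⟩ (by cases b <;> simp) hw hnw hw'
  have key u v (huv : u ≠ v) (h : ¬G.Adj u v) (hu : u ∈ Set.range g) :
      ∃ o, (L o).Separates u v := by
    obtain ⟨⟨e, b⟩, rfl⟩ := hu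
    by_cases hv : v ∈ Set.range g ∧ e ∈ G.adjPairs g
    · obtain ⟨⟨⟨e', b'⟩, rfl⟩, he⟩ := hv
      have he' : e' ∉ G.adjPairs g := fun he' =>
        h (hclique ⟨_, ⟨he, trivial⟩, rfl⟩ ⟨_, ⟨he', trivial⟩, rfl⟩ huv)
      exact ⟨some e', (hsep e' b' _ huv (h ∘ Adj.symm) (.inr he')).symm⟩
    · exact ⟨some e, hsep e b v huv.symm h (not_and_or.1 hv)⟩
  simpa using hasBoxRep_of_forall_separates L fun u v huv h => by
    by_cases hu : u ∈ Set.range g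
    · exact key u v huv h hu
    by_cases hv : v ∈ Set.range g
    · obtain ⟨o, ho⟩ := key v u huv.symm (h ∘ Adj.symm) hv
      exact ⟨o, ho.symm⟩
    exact ⟨none, separates_pointsOffCover hC huv hu hv⟩

theorem boxicity_le_minMaximalMatching_compl [Fintype V] (G : SimpleGraph V) :
    boxicity G ≤ minMaximalMatching Gᶜ := by
  obtain ⟨M, hM, hcard⟩ := exists_isMaximalMatchingSet_card_eq Gᶜ
  exact hcard ▸ Nat.sInf_le (hasBoxRep_card_of_isMaximalMatchingSet_compl hM)

theorem boxicity_le_minMaximalMatching_add_one [Fintype V] (G : SimpleGraph V) :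
    boxicity G ≤ minMaximalMatching G + 1 := by
  obtain ⟨M, hM, hcard⟩ := exists_isMaximalMatchingSet_card_eq G
  exact hcard ▸ Nat.sInf_le (hasBoxRep_card_add_one_of_isMaximalMatchingSet hM)

end SimpleGraph

theorem boxicity_le_min_nu_general {V : Type*} [Fintype V] [DecidableEq V]
    (G : SimpleGraph V) :
    boxicity G ≤ min (minMaximalMatching G + 1) (minMaximalMatching Gᶜ) ∧
    (Gᶜ.edgeSet = ∅ → minMaximalMatching Gᶜ = 0 ∧ boxicity G = 0) := by
  have hcompl := G.boxicity_le_minMaximalMatching_compl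
  refine ⟨le_min G.boxicity_le_minMaximalMatching_add_one hcompl, fun h => ?_⟩
  have hν := minMaximalMatching_eq_zero h
  exact ⟨hν, Nat.eq_zero_of_le_zero (hν ▸ hcompl)⟩

/-- `box(G) ≤ min {ν(G) + 1, ν(Ḡ)}`; moreover when the complement `Ḡ` has no edges
(i.e. `G` is complete), `ν(Ḡ) = 0` and indeed `box(G) = 0`. -/
theorem boxicity_le_min_nu {V : Type*} [Fintype V] [DecidableEq V] [Nonempty V]
    (G : SimpleGraph V) :
    boxicity G ≤ min (minMaximalMatching G + 1) (minMaximalMatching Gᶜ) ∧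
    (Gᶜ.edgeSet = ∅ → minMaximalMatching Gᶜ = 0 ∧ boxicity G = 0) :=
  boxicity_le_min_nu_general G
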